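/- For the weight function w(i,j) = (i+j)/i² on real numbers, let q_n = inf over all real sequences 1 ≤ a_1 ≤ a_2 ≤ ... ≤ a_n of the total weight w(a_n,...,a_1,1) = Σ_{i} w(a_i, a_{i+1}) (with a_0 = 1, jumps taken between consecutive terms of the decreasing pattern). Then q_1 = 2, q_n = 1 + 2√(q_{n-1}) for n ≥ 2, and lim_{n→∞} q_n = 3 + 2√2. -/

import Mathlib

/-!
Scaling a pattern `1 = a₀ ≤ a₁ ≤ ⋯ ≤ aₙ₊₁` by `t = a₁` leaves a pattern `bᵢ = aᵢ₊₁ / t` of length `n`,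
and the total weight becomes `1 + t + W(b) / t`. Hence the weights of length `n + 1` are exactly the
numbers `1 + t + S / t` with `t ≥ 1` and `S` a weight of length `n`. If `q ≥ 1` is the least weight of
length `n`, then by AM-GM `t + S / t ≥ t + q / t ≥ 2 √q`, with equality at `t = √q`, `S = q`.
The map `x ↦ 1 + 2 √x` contracts `[1, (1 + √2)²]` by a factor `2/3` towards its fixed point
`(1 + √2)² = 3 + 2√2`.
-/

/-- `patternInf n` is the infimum of total weights `∑_{i<n} (a_i + a_{i+1})/a_i²`
over nondecreasing real patterns `1 = a_0 ≤ a_1 ≤ ⋯ ≤ a_n`, for the weight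
function `w(i,j) = (i+j)/i²`. -/
noncomputable def patternInf (n : ℕ) : ℝ :=
  sInf {S : ℝ | ∃ a : ℕ → ℝ, a 0 = 1 ∧ (∀ i < n, a i ≤ a (i+1)) ∧
    S = ∑ i ∈ Finset.range n, (a i + a (i+1)) / (a i) ^ 2}

open Finset Filter Topology

noncomputable section

def patternWeight (n : ℕ) (a : ℕ → ℝ) : ℝ :=
  ∑ i ∈ range n, (a i + a (i + 1)) / a i ^ 2

def patternWeights (n : ℕ) : Set ℝ :=
  {S | ∃ a : ℕ → ℝ, a 0 = 1 ∧ (∀ i < n, a i ≤ a (i + 1)) ∧ S = patternWeight n a}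

lemma patternInf_eq_sInf (n : ℕ) : patternInf n = sInf (patternWeights n) := rfl

lemma one_le_of_le_succ {n : ℕ} {a : ℕ → ℝ} (h0 : a 0 = 1) (hmono : ∀ i < n, a i ≤ a (i + 1)) :
    ∀ i ≤ n, 1 ≤ a i
  | 0, _ => h0.ge
  | i + 1, hi => (one_le_of_le_succ h0 hmono i (by omega)).trans (hmono i (by omega))

lemma patternWeight_succ {n : ℕ} {t : ℝ} {a b : ℕ → ℝ} (ht : t ≠ 0) (ha0 : a 0 = 1)
    (hb0 : b 0 = 1) (hab : ∀ i, a (i + 1) = t * b i) (hb : ∀ i < n, b i ≠ 0) :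
    patternWeight (n + 1) a = 1 + t + patternWeight n b / t := by
  have hterm : ∀ i ∈ range n, (a (i + 1) + a (i + 1 + 1)) / a (i + 1) ^ 2
      = (b i + b (i + 1)) / b i ^ 2 / t := by
    intro i hi
    have := hb i (mem_range.mp hi)
    rw [hab, hab]
    field_simp
  rw [patternWeight, sum_range_succ', sum_congr rfl hterm, ← sum_div, patternWeight, ha0,
    hab, hb0]
  ring

lemma patternWeights_zero : patternWeights 0 = {0} := by
  ext S
  simp only [patternWeights, patternWeight, range_zero, sum_empty, Set.mem_singleton_iff]
  exact ⟨fun ⟨_, _, _, hS⟩ => hS, fun hS => ⟨fun _ => 1, rfl, by simp, hS⟩⟩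

lemma patternWeights_succ (n : ℕ) :
    patternWeights (n + 1) =
      (fun p : ℝ × ℝ => 1 + p.1 + p.2 / p.1) '' (Set.Ici 1 ×ˢ patternWeights n) := by
  ext S
  constructor
  · rintro ⟨a, ha0, hmono, rfl⟩
    have hpos := one_le_of_le_succ ha0 hmono
    have ht : 1 ≤ a 1 := hpos 1 (by omega)
    have ht0 : a 1 ≠ 0 := by positivity
    refine ⟨(a 1, patternWeight n fun i => a (i + 1) / a 1),
      ⟨ht, fun i => a (i + 1) / a 1, div_self ht0, fun i hi => ?_, rfl⟩, ?_⟩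
    · exact div_le_div_of_nonneg_right (hmono (i + 1) (by omega)) (by positivity)
    · refine (patternWeight_succ ht0 ha0 (div_self ht0) (fun i => ?_) fun i hi => ?_).symm
      · field_simp
      · have := hpos (i + 1) (by omega)
        positivity
  · rintro ⟨⟨t, _⟩, ⟨ht, b, hb0, hbmono, rfl⟩, rfl⟩
    have ht : 1 ≤ t := ht
    have hb := one_le_of_le_succ hb0 hbmono
    refine ⟨fun | 0 => 1 | k + 1 => t * b k, rfl, fun i hi => ?_,
      (patternWeight_succ (by positivity) rfl hb0 (fun _ => rfl) fun i hi => ?_).symm⟩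
    · rcases i with _ | i
      · simpa [hb0] using ht
      · exact mul_le_mul_of_nonneg_left (hbmono i (by omega)) (by positivity)
    · have := hb i hi.le
      positivity

lemma two_mul_sqrt_le_add_div {q t : ℝ} (hq : 0 ≤ q) (ht : 0 < t) : 2 * √q ≤ t + q / t := by
  have h : t + q / t - 2 * √q = (t - √q) ^ 2 / t := by
    field_simp
    rw [sub_sq, Real.sq_sqrt hq]
    ring
  linarith [show 0 ≤ (t - √q) ^ 2 / t by positivity]

lemma isLeast_image_one_add_add_div {W : Set ℝ} {Q : ℝ} (hW : IsLeast W Q) (hQ : 1 ≤ Q) :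
    IsLeast ((fun p : ℝ × ℝ => 1 + p.1 + p.2 / p.1) '' (Set.Ici 1 ×ˢ W)) (1 + 2 * √Q) := by
  refine ⟨⟨(√Q, Q), ⟨Real.one_le_sqrt.mpr hQ, hW.1⟩, ?_⟩, ?_⟩
  · simp only [Real.div_sqrt]
    ring
  · rintro _ ⟨⟨t, S⟩, ⟨ht, hS⟩, rfl⟩
    have ht : 0 < t := lt_of_lt_of_le one_pos ht
    have hQS : Q / t ≤ S / t := div_le_div_of_nonneg_right (hW.2 hS) ht.le
    linarith [two_mul_sqrt_le_add_div (q := Q) (by linarith) ht]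

lemma isLeast_patternWeights_one : IsLeast (patternWeights 1) 2 := by
  rw [patternWeights_succ, patternWeights_zero]
  refine ⟨⟨(1, 0), ⟨Set.mem_Ici.mpr le_rfl, rfl⟩, by norm_num⟩, ?_⟩
  rintro _ ⟨⟨t, S⟩, ⟨ht, rfl⟩, rfl⟩
  have ht : 1 ≤ t := ht
  simp only [zero_div]
  linarith

lemma isLeast_patternWeights_succ {n : ℕ} {q : ℝ} (h : IsLeast (patternWeights n) q)
    (hq : 1 ≤ q) : IsLeast (patternWeights (n + 1)) (1 + 2 * √q) := by
  rw [patternWeights_succ]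
  exact isLeast_image_one_add_add_div h hq

lemma isLeast_patternInf {n : ℕ} (hn : 1 ≤ n) :
    IsLeast (patternWeights n) (patternInf n) ∧ 1 ≤ patternInf n := by
  induction n, hn using Nat.le_induction with
  | base =>
    rw [patternInf_eq_sInf, isLeast_patternWeights_one.csInf_eq]
    exact ⟨isLeast_patternWeights_one, by norm_num⟩
  | succ n _ ih =>
    have h := isLeast_patternWeights_succ ih.1 ih.2
    rw [patternInf_eq_sInf, h.csInf_eq]
    exact ⟨h, by linarith [Real.sqrt_nonneg (patternInf n)]⟩

lemma patternInf_succ {n : ℕ} (hn : 1 ≤ n) : patternInf (n + 1) = 1 + 2 * √(patternInf n) :=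
  (isLeast_patternWeights_succ (isLeast_patternInf hn).1 (isLeast_patternInf hn).2).csInf_eq

lemma sqrt_three_add_two_mul_sqrt_two : √(3 + 2 * √2) = 1 + √2 := by
  rw [show 3 + 2 * √2 = (1 + √2) ^ 2 by ring_nf; rw [Real.sq_sqrt zero_le_two]; ring]
  exact Real.sqrt_sq (by positivity)

lemma one_add_two_mul_sqrt_le {x : ℝ} (hx : x ≤ 3 + 2 * √2) : 1 + 2 * √x ≤ 3 + 2 * √2 := by
  have := Real.sqrt_le_sqrt hx
  rw [sqrt_three_add_two_mul_sqrt_two] at this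
  linarith

lemma sub_one_add_two_mul_sqrt_le {x : ℝ} (hx1 : 1 ≤ x) (hx : x ≤ 3 + 2 * √2) :
    3 + 2 * √2 - (1 + 2 * √x) ≤ 2 / 3 * (3 + 2 * √2 - x) := by
  have hsx : √x ≤ 1 + √2 := by
    simpa [sqrt_three_add_two_mul_sqrt_two] using Real.sqrt_le_sqrt hx
  have hsx1 : 1 ≤ √x := Real.one_le_sqrt.mpr hx1
  have hs2 : 1 ≤ √2 := Real.one_le_sqrt.mpr one_le_two
  have hsx2 : √x ^ 2 = x := Real.sq_sqrt (by linarith)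
  have hs22 : √2 ^ 2 = 2 := Real.sq_sqrt zero_le_two
  -- `3 + 2√2 - x = (1 + √2 - √x)(1 + √2 + √x)` and `1 + √2 + √x ≥ 3`
  nlinarith [mul_nonneg (sub_nonneg.mpr hsx) (show 0 ≤ 1 + √2 + √x - 3 by linarith)]

lemma tendsto_of_succ_eq_one_add_two_mul_sqrt {u : ℕ → ℝ} (h1 : 1 ≤ u 0)
    (hL : u 0 ≤ 3 + 2 * √2) (hu : ∀ n, u (n + 1) = 1 + 2 * √(u n)) :
    Tendsto u atTop (𝓝 (3 + 2 * √2)) := by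
  have hbound : ∀ n, 1 ≤ u n ∧ u n ≤ 3 + 2 * √2 ∧
      3 + 2 * √2 - u n ≤ (2 / 3) ^ n * (3 + 2 * √2 - u 0) := by
    intro n
    induction n with
    | zero => simp [h1, hL]
    | succ n ih =>
      obtain ⟨h1, hL, hdist⟩ := ih
      rw [hu, pow_succ]
      refine ⟨by linarith [Real.sqrt_nonneg (u n)], one_add_two_mul_sqrt_le hL, ?_⟩
      linarith [sub_one_add_two_mul_sqrt_le h1 hL]
  rw [tendsto_iff_norm_sub_tendsto_zero]
  refine squeeze_zero (fun _ => norm_nonneg _) (fun n => ?_) (by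
    simpa using (tendsto_pow_atTop_nhds_zero_of_lt_one (r := (2 / 3 : ℝ)) (by norm_num)
      (by norm_num)).mul_const (3 + 2 * √2 - u 0))
  rw [Real.norm_eq_abs, abs_sub_comm, abs_of_nonneg (by linarith [hbound n])]
  exact (hbound n).2.2

end

theorem stmt_10 :
    patternInf 1 = 2 ∧
    (∀ n, 2 ≤ n → patternInf n = 1 + 2 * Real.sqrt (patternInf (n-1))) ∧
    Filter.Tendsto patternInf Filter.atTop (nhds (3 + 2 * Real.sqrt 2)) := by
  have hone : patternInf 1 = 2 := isLeast_patternWeights_one.csInf_eq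
  refine ⟨hone, fun n hn => ?_, ?_⟩
  · obtain ⟨m, rfl⟩ : ∃ m, n = m + 1 := ⟨n - 1, by omega⟩
    exact patternInf_succ (by omega)
  · exact (tendsto_add_atTop_iff_nat 1).mp
      (tendsto_of_succ_eq_one_add_two_mul_sqrt (by rw [hone]; norm_num)
        (by rw [hone]; linarith [Real.sqrt_nonneg 2]) fun n => patternInf_succ (by omega))
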